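/- arXiv:1212.3895 — 2 statements merged into one kernel-verified Lean document; each statement's English description precedes it below -/
import Mathlib

section
/- Let f, g : I → ℝ be twice continuously differentiable with g'' > 0 and f''(t) = t·g''(t) on I. Then for any n ≥ 2, any positive weights p₁,…,pₙ summing to 1, and any x₁,…,xₙ ∈ I, the quotient (∑ pᵢ f(xᵢ) - f(∑ pᵢ xᵢ)) / (∑ pᵢ g(xᵢ) - g(∑ pᵢ xᵢ)) lies between min{x₁,…,xₙ} and max{x₁,…,xₙ}, provided not all xᵢ are equal. -/
/-!
On `I ∩ [c, ∞)` the function `f - c g` has second derivative `(t - c) g''(t) ≥ 0`, so it is convex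
there, and on `I ∩ (-∞, c]` it is concave. Jensen's inequality and the linearity of the Jensen
functional in the function give `m J(g) ≤ J(f) ≤ M J(g)` for `m = min xᵢ`, `M = max xᵢ`, and
`J(g) > 0` by strict convexity of `g`.
-/

open Set

section JensenFunctional

variable {ι : Type*} [Fintype ι]

def jensenFunctional (p x : ι → ℝ) (h : ℝ → ℝ) : ℝ :=
  ∑ i, p i * h (x i) - h (∑ i, p i * x i)

lemma jensenFunctional_sub_const_mul (p x : ι → ℝ) (f g : ℝ → ℝ) (c : ℝ) :
    jensenFunctional p x (fun t => f t - c * g t) =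
      jensenFunctional p x f - c * jensenFunctional p x g := by
  simp only [jensenFunctional, mul_sub, Finset.sum_sub_distrib, Finset.mul_sum]
  simp only [mul_left_comm (p _) c]
  ring

variable {D : Set ℝ} {h : ℝ → ℝ} {p x : ι → ℝ}

lemma ConvexOn.jensenFunctional_nonneg (hh : ConvexOn ℝ D h) (hp : ∀ i, 0 ≤ p i)
    (hp1 : ∑ i, p i = 1) (hx : ∀ i, x i ∈ D) : 0 ≤ jensenFunctional p x h := by
  have := hh.map_sum_le (t := Finset.univ) (fun i _ => hp i) hp1 (fun i _ => hx i)
  simp only [smul_eq_mul] at this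
  exact sub_nonneg.2 this

lemma ConcaveOn.jensenFunctional_nonpos (hh : ConcaveOn ℝ D h) (hp : ∀ i, 0 ≤ p i)
    (hp1 : ∑ i, p i = 1) (hx : ∀ i, x i ∈ D) : jensenFunctional p x h ≤ 0 := by
  have := hh.le_map_sum (t := Finset.univ) (fun i _ => hp i) hp1 (fun i _ => hx i)
  simp only [smul_eq_mul] at this
  exact sub_nonpos.2 this

lemma StrictConvexOn.jensenFunctional_pos (hh : StrictConvexOn ℝ D h) (hp : ∀ i, 0 < p i)
    (hp1 : ∑ i, p i = 1) (hx : ∀ i, x i ∈ D) (hne : ∃ i j, x i ≠ x j) :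
    0 < jensenFunctional p x h := by
  obtain ⟨i, j, hij⟩ := hne
  have := hh.map_sum_lt (t := Finset.univ) (fun i _ => hp i) hp1 (fun i _ => hx i)
    ⟨i, Finset.mem_univ _, j, Finset.mem_univ _, hij⟩
  simp only [smul_eq_mul] at this
  exact sub_pos.2 this

end JensenFunctional

section SecondDerivative

variable {I J : Set ℝ} {f g φ : ℝ → ℝ}

lemma ContDiffOn.convexOn_of_deriv_deriv_nonneg (hφ : ContDiffOn ℝ 2 φ I) (hJ : Convex ℝ J)
    (hJI : J ⊆ I) (hφ'' : ∀ t ∈ interior J, 0 ≤ deriv (deriv φ) t) : ConvexOn ℝ J φ := by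
  have hU : ContDiffOn ℝ 2 φ (interior I) := hφ.mono interior_subset
  have hφ' : ContDiffOn ℝ 1 (deriv φ) (interior I) := hU.deriv_of_isOpen isOpen_interior le_rfl
  exact convexOn_of_deriv2_nonneg hJ (hφ.continuousOn.mono hJI)
    ((hU.differentiableOn two_ne_zero).mono (interior_mono hJI))
    ((hφ'.differentiableOn one_ne_zero).mono (interior_mono hJI)) hφ''

lemma ContDiffOn.concaveOn_of_deriv_deriv_nonpos (hφ : ContDiffOn ℝ 2 φ I) (hJ : Convex ℝ J)
    (hJI : J ⊆ I) (hφ'' : ∀ t ∈ interior J, deriv (deriv φ) t ≤ 0) : ConcaveOn ℝ J φ := by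
  rw [← neg_convexOn_iff]
  refine hφ.neg.convexOn_of_deriv_deriv_nonneg hJ hJI fun t ht => ?_
  simpa [deriv.neg'] using hφ'' t ht

lemma deriv_deriv_sub_const_mul (hf : ContDiffOn ℝ 2 f I) (hg : ContDiffOn ℝ 2 g I) (c : ℝ)
    {t : ℝ} (ht : t ∈ interior I) :
    deriv (deriv fun s => f s - c * g s) t = deriv (deriv f) t - c * deriv (deriv g) t := by
  have hfU : ContDiffOn ℝ 2 f (interior I) := hf.mono interior_subset
  have hgU : ContDiffOn ℝ 2 g (interior I) := hg.mono interior_subset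
  have hdiff : ∀ {k : ℝ → ℝ}, ContDiffOn ℝ 2 k (interior I) → ∀ s ∈ interior I,
      DifferentiableAt ℝ k s ∧ DifferentiableAt ℝ (deriv k) s := fun hk s hs =>
    ⟨(hk.differentiableOn two_ne_zero).differentiableAt (isOpen_interior.mem_nhds hs),
      ((hk.deriv_of_isOpen isOpen_interior (m := 1) le_rfl).differentiableOn
        one_ne_zero).differentiableAt (isOpen_interior.mem_nhds hs)⟩
  have hderiv : deriv (fun s => f s - c * g s) =ᶠ[nhds t] fun s => deriv f s - c * deriv g s := by
    filter_upwards [isOpen_interior.mem_nhds ht] with s hs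
    rw [deriv_fun_sub (hdiff hfU s hs).1 ((hdiff hgU s hs).1.const_mul c),
      deriv_const_mul _ (hdiff hgU s hs).1]
  rw [hderiv.deriv_eq, deriv_fun_sub (hdiff hfU t ht).2 ((hdiff hgU t ht).2.const_mul c),
    deriv_const_mul _ (hdiff hgU t ht).2]

variable (hI : Convex ℝ I) (hf : ContDiffOn ℝ 2 f I) (hg : ContDiffOn ℝ 2 g I)
  (hg'' : ∀ t ∈ I, 0 ≤ deriv (deriv g) t)
  (hfg : ∀ t ∈ I, deriv (deriv f) t = t * deriv (deriv g) t)
include hI hf hg hg'' hfg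

lemma convexOn_sub_const_mul (c : ℝ) : ConvexOn ℝ (I ∩ Ici c) fun t => f t - c * g t := by
  refine (hf.sub (contDiffOn_const.mul hg)).convexOn_of_deriv_deriv_nonneg (hI.inter (convex_Ici c))
    inter_subset_left fun t ht => ?_
  obtain ⟨htI, hct⟩ := interior_subset ht
  rw [deriv_deriv_sub_const_mul hf hg c (interior_mono inter_subset_left ht), hfg t htI, ← sub_mul]
  exact mul_nonneg (sub_nonneg.2 hct) (hg'' t htI)

lemma concaveOn_sub_const_mul (c : ℝ) : ConcaveOn ℝ (I ∩ Iic c) fun t => f t - c * g t := by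
  refine (hf.sub (contDiffOn_const.mul hg)).concaveOn_of_deriv_deriv_nonpos (hI.inter (convex_Iic c))
    inter_subset_left fun t ht => ?_
  obtain ⟨htI, htc⟩ := interior_subset ht
  rw [deriv_deriv_sub_const_mul hf hg c (interior_mono inter_subset_left ht), hfg t htI, ← sub_mul]
  exact mul_nonpos_of_nonpos_of_nonneg (sub_nonpos.2 htc) (hg'' t htI)

end SecondDerivative

theorem stmt2_general (I : Set ℝ) (hI : I.OrdConnected) (f g : ℝ → ℝ)
    (hf : ContDiffOn ℝ 2 f I) (hg : ContDiffOn ℝ 2 g I)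
    (hg'' : ∀ t ∈ I, 0 < deriv (deriv g) t)
    (hfg : ∀ t ∈ I, deriv (deriv f) t = t * deriv (deriv g) t)
    (n : ℕ) (p : Fin n → ℝ) (hp : ∀ i, 0 < p i)
    (hp1 : ∑ i, p i = 1) (x : Fin n → ℝ) (hx : ∀ i, x i ∈ I)
    (hne : ¬ ∀ i j, x i = x j) :
    sInf (Set.range x) ≤
      (∑ i, p i * f (x i) - f (∑ i, p i * x i)) /
        (∑ i, p i * g (x i) - g (∑ i, p i * x i)) ∧
    (∑ i, p i * f (x i) - f (∑ i, p i * x i)) /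
        (∑ i, p i * g (x i) - g (∑ i, p i * x i)) ≤ sSup (Set.range x) := by
  set m := sInf (range x)
  set M := sSup (range x)
  have hg''₀ : ∀ t ∈ I, 0 ≤ deriv (deriv g) t := fun t ht => (hg'' t ht).le
  have hp₀ : ∀ i, 0 ≤ p i := fun i => (hp i).le
  have hgJ : 0 < jensenFunctional p x g :=
    (strictConvexOn_of_deriv2_pos hI.convex hg.continuousOn fun t ht =>
      hg'' t (interior_subset ht)).jensenFunctional_pos hp hp1 hx (by simpa using hne)
  have hlower := (convexOn_sub_const_mul hI.convex hf hg hg''₀ hfg m).jensenFunctional_nonneg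
    hp₀ hp1 fun i => ⟨hx i, csInf_le (finite_range x).bddBelow ⟨i, rfl⟩⟩
  have hupper := (concaveOn_sub_const_mul hI.convex hf hg hg''₀ hfg M).jensenFunctional_nonpos
    hp₀ hp1 fun i => ⟨hx i, le_csSup (finite_range x).bddAbove ⟨i, rfl⟩⟩
  rw [jensenFunctional_sub_const_mul] at hlower hupper
  change m ≤ jensenFunctional p x f / jensenFunctional p x g ∧
    jensenFunctional p x f / jensenFunctional p x g ≤ M
  exact ⟨(le_div_iff₀ hgJ).2 (by linarith), (div_le_iff₀ hgJ).2 (by linarith)⟩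

theorem stmt2 (I : Set ℝ) (hI : I.OrdConnected) (f g : ℝ → ℝ)
    (hf : ContDiffOn ℝ 2 f I) (hg : ContDiffOn ℝ 2 g I)
    (hg'' : ∀ t ∈ I, 0 < deriv (deriv g) t)
    (hfg : ∀ t ∈ I, deriv (deriv f) t = t * deriv (deriv g) t)
    (n : ℕ) (hn : 2 ≤ n) (p : Fin n → ℝ) (hp : ∀ i, 0 < p i)
    (hp1 : ∑ i, p i = 1) (x : Fin n → ℝ) (hx : ∀ i, x i ∈ I)
    (hne : ¬ ∀ i j, x i = x j) :
    sInf (Set.range x) ≤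
      (∑ i, p i * f (x i) - f (∑ i, p i * x i)) /
        (∑ i, p i * g (x i) - g (∑ i, p i * x i)) ∧
    (∑ i, p i * f (x i) - f (∑ i, p i * x i)) /
        (∑ i, p i * g (x i) - g (∑ i, p i * x i)) ≤ sSup (Set.range x) :=
  stmt2_general I hI f g hf hg hg'' hfg n p hp hp1 x hx hne
end

section
/- For all positive reals a ≠ b, the mean λ_1(a,b) = (b-a)² / (4(a log a + b log b - (a+b) log((a+b)/2))) satisfies L(a,b) ≤ λ_1(a,b) ≤ I(a,b), where L(a,b) = (b-a)/(log b - log a) and I(a,b) = (1/e)(b^b/a^a)^{1/(b-a)}. -/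
/-!
Write `a = s (1 - x)`, `b = s (1 + x)` with `s > 0`, `0 < x < 1`, and let
`P = log (1 + x) - log (1 - x)`, `Q = log (1 + x) + log (1 - x)`. Then `L = 2 s x / P`,
`λ₁ = s x² / (Q + x P)` and `I = s exp ((x Q + P) / (2 x) - 1)`, so `L ≤ λ₁` reads
`2 (Q + x P) ≤ x P`, and `λ₁ ≤ I` says that `W = log (I / λ₁)` is nonnegative.
Since `W ≥ Q / 2 → 0` as `x → 0⁺`, it suffices that `W` is increasing. Its derivative has the sign
of `φ = -Q - x P² / (2 x + P)`, and `φ` is increasing because `φ'` has the sign of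
`8 x³ - (1 - x²) P³`, i.e. of `L³ - G² A` (Leach–Sholander). The remaining comparisons of `P`
and `Q` with rational functions follow by comparing derivatives from `x = 0`.
-/

open Real Set Filter Topology

theorem le_of_hasDerivAt_le {f g f' g' : ℝ → ℝ} {a b x : ℝ}
    (hf : ∀ y ∈ Ico a b, HasDerivAt f (f' y) y) (hg : ∀ y ∈ Ico a b, HasDerivAt g (g' y) y)
    (hfg : f a ≤ g a) (hf'g' : ∀ y ∈ Ioo a b, f' y ≤ g' y) (hx : x ∈ Ico a b) : f x ≤ g x := by
  have hd : ∀ y ∈ Ico a b, HasDerivAt (g - f) (g' y - f' y) y := fun y hy => (hg y hy).sub (hf y hy)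
  have hmono := monotoneOn_of_hasDerivWithinAt_nonneg (f' := fun y => g' y - f' y)
    (convex_Ico a b) (fun y hy => (hd y hy).continuousAt.continuousWithinAt)
    (fun y hy => by
      rw [interior_Ico] at hy ⊢
      exact (hd y (Ioo_subset_Ico_self hy)).hasDerivWithinAt)
    (fun y hy => by rw [interior_Ico] at hy; exact sub_nonneg.2 (hf'g' y hy))
  have := hmono (left_mem_Ico.2 (hx.1.trans_lt hx.2)) hx hx.1
  simp only [Pi.sub_apply] at this
  linarith

theorem monotoneOn_Ioo_of_hasDerivAt_nonneg {f f' : ℝ → ℝ} {a b : ℝ}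
    (hf : ∀ x ∈ Ioo a b, HasDerivAt f (f' x) x) (hf' : ∀ x ∈ Ioo a b, 0 ≤ f' x) :
    MonotoneOn f (Ioo a b) :=
  monotoneOn_of_hasDerivWithinAt_nonneg (convex_Ioo a b)
    (fun y hy => (hf y hy).continuousAt.continuousWithinAt)
    (fun y hy => by rw [interior_Ioo] at hy ⊢; exact (hf y hy).hasDerivWithinAt)
    (by simpa only [interior_Ioo] using hf')

theorem nonneg_of_monotoneOn_of_le {f g : ℝ → ℝ} {b : ℝ} (hf : MonotoneOn f (Ioo 0 b))
    (hg : ContinuousAt g 0) (hg0 : g 0 = 0) (hgf : ∀ x ∈ Ioo 0 b, g x ≤ f x)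
    {x : ℝ} (hx : x ∈ Ioo 0 b) : 0 ≤ f x := by
  have hlim : Tendsto g (𝓝[>] 0) (𝓝 0) := by
    simpa [hg0] using hg.tendsto.mono_left (nhdsWithin_le_nhds (s := Ioi 0))
  refine le_of_tendsto hlim ?_
  filter_upwards [Ioo_mem_nhdsGT hx.1] with y hy
  have hy' : y ∈ Ioo 0 b := ⟨hy.1, hy.2.trans hx.2⟩
  exact (hgf y hy').trans (hf hy' hx hy.2.le)

theorem one_sub_sq_pos {x : ℝ} (hx : x ∈ Ioo (-1 : ℝ) 1) : 0 < 1 - x ^ 2 := by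
  nlinarith [hx.1, hx.2]

noncomputable def logRatio (x : ℝ) : ℝ := log (1 + x) - log (1 - x)

noncomputable def logProd (x : ℝ) : ℝ := log (1 + x) + log (1 - x)

theorem hasDerivAt_logRatio {x : ℝ} (hx : x ∈ Ioo (-1 : ℝ) 1) :
    HasDerivAt logRatio (2 / (1 - x ^ 2)) x := by
  have h₁ : 1 + x ≠ 0 := by linarith [hx.1]
  have h₂ : 1 - x ≠ 0 := by linarith [hx.2]
  have h₃ := (one_sub_sq_pos hx).ne'
  refine ((((hasDerivAt_id' x).const_add 1).log h₁).sub
    (((hasDerivAt_id' x).const_sub 1).log h₂)).congr_deriv ?_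
  field_simp
  ring

theorem hasDerivAt_logProd {x : ℝ} (hx : x ∈ Ioo (-1 : ℝ) 1) :
    HasDerivAt logProd (-(2 * x) / (1 - x ^ 2)) x := by
  have h₁ : 1 + x ≠ 0 := by linarith [hx.1]
  have h₂ : 1 - x ≠ 0 := by linarith [hx.2]
  have h₃ := (one_sub_sq_pos hx).ne'
  refine ((((hasDerivAt_id' x).const_add 1).log h₁).add
    (((hasDerivAt_id' x).const_sub 1).log h₂)).congr_deriv ?_
  field_simp
  ring

theorem hasDerivAt_logProd_add_mul_logRatio {x : ℝ} (hx : x ∈ Ioo (-1 : ℝ) 1) :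
    HasDerivAt (fun y => logProd y + y * logRatio y) (logRatio x) x := by
  have h₃ := (one_sub_sq_pos hx).ne'
  refine ((hasDerivAt_logProd hx).add ((hasDerivAt_id' x).mul
    (hasDerivAt_logRatio hx))).congr_deriv ?_
  field_simp
  ring

theorem Ico_zero_one_subset_Ioo : Ico (0 : ℝ) 1 ⊆ Ioo (-1) 1 := Ico_subset_Ioo_left (by norm_num)

theorem two_mul_le_logRatio {x : ℝ} (hx : x ∈ Ico (0 : ℝ) 1) : 2 * x ≤ logRatio x := by
  refine le_of_hasDerivAt_le (fun y _ => (hasDerivAt_id' y).const_mul 2)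
    (fun y hy => hasDerivAt_logRatio (Ico_zero_one_subset_Ioo hy)) (by simp [logRatio])
    (fun y hy => ?_) hx
  have hr := one_sub_sq_pos (Ico_zero_one_subset_Ioo (Ioo_subset_Ico_self hy))
  rw [mul_one, le_div_iff₀ hr]
  nlinarith

theorem sq_le_logProd_add_mul_logRatio {x : ℝ} (hx : x ∈ Ico (0 : ℝ) 1) :
    x ^ 2 ≤ logProd x + x * logRatio x :=
  le_of_hasDerivAt_le (fun y _ => hasDerivAt_pow 2 y)
    (fun y hy => hasDerivAt_logProd_add_mul_logRatio (Ico_zero_one_subset_Ioo hy))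
    (by simp [logProd, logRatio])
    (fun y hy => by simpa using two_mul_le_logRatio (Ioo_subset_Ico_self hy)) hx

theorem logRatio_le {x : ℝ} (hx : x ∈ Ico (0 : ℝ) 1) :
    logRatio x ≤ 2 * x * (3 - 2 * x ^ 2 + x ^ 4) / (3 * (1 - x ^ 2)) := by
  refine le_of_hasDerivAt_le (fun y hy => hasDerivAt_logRatio (Ico_zero_one_subset_Ioo hy))
    (g := fun y => 2 * y * (3 - 2 * y ^ 2 + y ^ 4) / (3 * (1 - y ^ 2)))
    (g' := fun y => 2 / (1 - y ^ 2) + 2 * y ^ 4 * (7 - 3 * y ^ 2) / (3 * (1 - y ^ 2) ^ 2))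
    (fun y hy => ?_) ?_ (fun y hy => le_add_of_nonneg_right ?_) hx
  · have hr := one_sub_sq_pos (Ico_zero_one_subset_Ioo hy)
    refine ((((hasDerivAt_id' y).const_mul 2).fun_mul
      ((((hasDerivAt_pow 2 y).const_mul 2).const_sub 3).fun_add (hasDerivAt_pow 4 y))).fun_div
      (((hasDerivAt_pow 2 y).const_sub 1).const_mul 3) (by positivity)).congr_deriv ?_
    field_simp
    ring
  · simp [logRatio]
  · have : 0 ≤ 7 - 3 * y ^ 2 := by nlinarith [hy.1, hy.2]
    positivity

theorem logRatio_le_two_mul_div {x : ℝ} (hx : x ∈ Ico (0 : ℝ) 1) :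
    logRatio x ≤ 2 * x / (1 - x ^ 2) := by
  have hr := one_sub_sq_pos (Ico_zero_one_subset_Ioo hx)
  refine (logRatio_le hx).trans ?_
  rw [div_le_div_iff₀ (by positivity) hr]
  nlinarith [hx.1, pow_nonneg hx.1 3, pow_nonneg hx.1 5, mul_nonneg hx.1 (sq_nonneg (1 - x ^ 2))]

theorem logRatio_sq_le {x : ℝ} (hx : x ∈ Ico (0 : ℝ) 1) :
    logRatio x ^ 2 ≤ 4 * x ^ 2 * (3 - x ^ 2) / (3 * (1 - x ^ 2)) := by
  refine le_of_hasDerivAt_le (f := fun y => logRatio y ^ 2)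
    (g := fun y => 4 * y ^ 2 * (3 - y ^ 2) / (3 * (1 - y ^ 2)))
    (f' := fun y => 4 / (1 - y ^ 2) * logRatio y)
    (g' := fun y => 4 / (1 - y ^ 2) * (2 * y * (3 - 2 * y ^ 2 + y ^ 4) / (3 * (1 - y ^ 2))))
    (fun y hy => ?_) (fun y hy => ?_) ?_
    (fun y hy => mul_le_mul_of_nonneg_left (logRatio_le (Ioo_subset_Ico_self hy)) ?_) hx
  · have hr := one_sub_sq_pos (Ico_zero_one_subset_Ioo hy)
    refine ((hasDerivAt_logRatio (Ico_zero_one_subset_Ioo hy)).pow 2).congr_deriv ?_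
    field_simp
    ring
  · have hr := one_sub_sq_pos (Ico_zero_one_subset_Ioo hy)
    refine ((((hasDerivAt_pow 2 y).const_mul 4).fun_mul ((hasDerivAt_pow 2 y).const_sub 3)).fun_div
      (((hasDerivAt_pow 2 y).const_sub 1).const_mul 3) (by positivity)).congr_deriv ?_
    field_simp
    ring
  · simp [logRatio]
  · have hr := one_sub_sq_pos (Ico_zero_one_subset_Ioo (Ioo_subset_Ico_self hy))
    positivity

theorem logRatio_pow_three_le {x : ℝ} (hx : x ∈ Ico (0 : ℝ) 1) :
    logRatio x ^ 3 ≤ 8 * x ^ 3 / (1 - x ^ 2) := by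
  refine le_of_hasDerivAt_le (f := fun y => logRatio y ^ 3) (g := fun y => 8 * y ^ 3 / (1 - y ^ 2))
    (f' := fun y => 6 / (1 - y ^ 2) * logRatio y ^ 2)
    (g' := fun y => 6 / (1 - y ^ 2) * (4 * y ^ 2 * (3 - y ^ 2) / (3 * (1 - y ^ 2))))
    (fun y hy => ?_) (fun y hy => ?_) ?_
    (fun y hy => mul_le_mul_of_nonneg_left (logRatio_sq_le (Ioo_subset_Ico_self hy)) ?_) hx
  · have hr := one_sub_sq_pos (Ico_zero_one_subset_Ioo hy)
    refine ((hasDerivAt_logRatio (Ico_zero_one_subset_Ioo hy)).pow 3).congr_deriv ?_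
    field_simp
    ring
  · have hr := one_sub_sq_pos (Ico_zero_one_subset_Ioo hy)
    refine (((hasDerivAt_pow 3 y).const_mul 8).fun_div
      ((hasDerivAt_pow 2 y).const_sub 1) hr.ne').congr_deriv ?_
    field_simp
    ring
  · simp [logRatio]
  · have hr := one_sub_sq_pos (Ico_zero_one_subset_Ioo (Ioo_subset_Ico_self hy))
    positivity

theorem two_mul_logProd_add_mul_logRatio_le {x : ℝ} (hx : x ∈ Ico (0 : ℝ) 1) :
    2 * (logProd x + x * logRatio x) ≤ x * logRatio x := by
  refine le_of_hasDerivAt_le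
    (fun y hy => (hasDerivAt_logProd_add_mul_logRatio (Ico_zero_one_subset_Ioo hy)).const_mul 2)
    (fun y hy => (hasDerivAt_id' y).fun_mul (hasDerivAt_logRatio (Ico_zero_one_subset_Ioo hy)))
    (by simp [logRatio, logProd]) (fun y hy => ?_) hx
  have := logRatio_le_two_mul_div (Ioo_subset_Ico_self hy)
  rw [one_mul, ← mul_div_assoc, mul_comm y]
  linarith

theorem logProd_nonpos {x : ℝ} (hx : x ∈ Ioo (-1 : ℝ) 1) : logProd x ≤ 0 := by
  have h₁ := log_le_sub_one_of_pos (show 0 < 1 + x by linarith [hx.1])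
  have h₂ := log_le_sub_one_of_pos (show 0 < 1 - x by linarith [hx.2])
  rw [logProd]
  linarith

noncomputable def logGapFactor (x : ℝ) : ℝ :=
  -logProd x - x * logRatio x ^ 2 / (2 * x + logRatio x)

theorem hasDerivAt_logGapFactor {x : ℝ} (hx : x ∈ Ioo (0 : ℝ) 1) :
    HasDerivAt logGapFactor
      ((8 * x ^ 3 / (1 - x ^ 2) - logRatio x ^ 3) / (2 * x + logRatio x) ^ 2) x := by
  have hx' : x ∈ Ioo (-1 : ℝ) 1 := Ioo_subset_Ioo_left (by norm_num) hx
  have hP := two_mul_le_logRatio (Ioo_subset_Ico_self hx)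
  have hd : 2 * x + logRatio x ≠ 0 := by linarith [hx.1]
  refine ((hasDerivAt_logProd hx').neg.sub (((hasDerivAt_id' x).fun_mul
    ((hasDerivAt_logRatio hx').pow 2)).fun_div (((hasDerivAt_id' x).const_mul 2).fun_add
    (hasDerivAt_logRatio hx')) hd)).congr_deriv ?_
  simp only [Pi.pow_apply]
  field_simp
  ring

theorem logGapFactor_nonneg {x : ℝ} (hx : x ∈ Ioo (0 : ℝ) 1) : 0 ≤ logGapFactor x := by
  refine nonneg_of_monotoneOn_of_le (g := fun y => -(y * logRatio y)) ?_ ?_ (by simp) ?_ hx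
  · refine monotoneOn_Ioo_of_hasDerivAt_nonneg (fun y hy => hasDerivAt_logGapFactor hy)
      (fun y hy => div_nonneg (sub_nonneg.2 (logRatio_pow_three_le (Ioo_subset_Ico_self hy)))
        (sq_nonneg _))
  · exact ((continuousAt_id.mul
      (hasDerivAt_logRatio (by norm_num : (0 : ℝ) ∈ Ioo (-1) 1)).continuousAt).neg)
  · intro y hy
    have hQ := logProd_nonpos (Ioo_subset_Ioo_left (by norm_num) hy)
    have hP := two_mul_le_logRatio (Ioo_subset_Ico_self hy)
    have hd : 0 < 2 * y + logRatio y := by linarith [hy.1]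
    have : y * logRatio y ^ 2 / (2 * y + logRatio y) ≤ y * logRatio y := by
      rw [div_le_iff₀ hd]
      nlinarith [hy.1, mul_pos hy.1 hy.1]
    rw [logGapFactor]
    linarith

-- `log (I / λ₁)` at `(1 - x, 1 + x)`
noncomputable def logGap (x : ℝ) : ℝ :=
  (x * logProd x + logRatio x) / (2 * x) - 1 + log (logProd x + x * logRatio x) - 2 * log x

theorem hasDerivAt_logGap {x : ℝ} (hx : x ∈ Ioo (0 : ℝ) 1) :
    HasDerivAt logGap ((2 * x + logRatio x) * logGapFactor x /
      (2 * x ^ 2 * (logProd x + x * logRatio x))) x := by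
  have hx' : x ∈ Ioo (-1 : ℝ) 1 := Ioo_subset_Ioo_left (by norm_num) hx
  have hr := one_sub_sq_pos hx'
  have hP := two_mul_le_logRatio (Ioo_subset_Ico_self hx)
  have hD := sq_le_logProd_add_mul_logRatio (Ioo_subset_Ico_self hx)
  have hd : x * 2 + logRatio x ≠ 0 := by linarith [hx.1]
  have hD' : logProd x + x * logRatio x ≠ 0 := by nlinarith [hx.1]
  have hx0 : x ≠ 0 := hx.1.ne'
  refine (((((hasDerivAt_id' x).fun_mul (hasDerivAt_logProd hx')).fun_add
    (hasDerivAt_logRatio hx')).fun_div ((hasDerivAt_id' x).const_mul 2)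
    (mul_ne_zero two_ne_zero hx0)).sub_const 1
    |>.fun_add ((hasDerivAt_logProd_add_mul_logRatio hx').log hD') |>.fun_sub
    ((hasDerivAt_log hx0).const_mul 2)).congr_deriv ?_
  rw [logGapFactor]
  field_simp
  ring

theorem logGap_nonneg {x : ℝ} (hx : x ∈ Ioo (0 : ℝ) 1) : 0 ≤ logGap x := by
  refine nonneg_of_monotoneOn_of_le (g := fun y => logProd y / 2) ?_ ?_ (by simp [logProd]) ?_ hx
  · refine monotoneOn_Ioo_of_hasDerivAt_nonneg (fun y hy => hasDerivAt_logGap hy) (fun y hy => ?_)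
    have hP := two_mul_le_logRatio (Ioo_subset_Ico_self hy)
    have hD := sq_le_logProd_add_mul_logRatio (Ioo_subset_Ico_self hy)
    have := logGapFactor_nonneg hy
    have : 0 < logProd y + y * logRatio y := by nlinarith [hy.1]
    have : 0 < 2 * y + logRatio y := by linarith [hy.1]
    positivity
  · exact (hasDerivAt_logProd (by norm_num : (0 : ℝ) ∈ Ioo (-1) 1)).continuousAt.div_const 2
  · intro y hy
    have hP := two_mul_le_logRatio (Ioo_subset_Ico_self hy)
    have hD := sq_le_logProd_add_mul_logRatio (Ioo_subset_Ico_self hy)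
    have hlog : log (y ^ 2) ≤ log (logProd y + y * logRatio y) :=
      log_le_log (by nlinarith [hy.1]) hD
    rw [log_pow, Nat.cast_ofNat] at hlog
    have hN : logProd y / 2 ≤ (y * logProd y + logRatio y) / (2 * y) - 1 := by
      rw [le_sub_iff_add_le, le_div_iff₀ (by linarith [hy.1])]
      nlinarith
    rw [logGap]
    linarith

noncomputable def logMean (a b : ℝ) : ℝ := (b - a) / (log b - log a)

noncomputable def lambdaOne (a b : ℝ) : ℝ :=
  (b - a) ^ 2 / (4 * (a * log a + b * log b - (a + b) * log ((a + b) / 2)))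

noncomputable def identricMean (a b : ℝ) : ℝ := (1 / exp 1) * (b ^ b / a ^ a) ^ (1 / (b - a))

theorem logMean_comm (a b : ℝ) : logMean a b = logMean b a := by
  rw [logMean, logMean, ← neg_sub a b, ← neg_sub (log a), neg_div_neg_eq]

theorem lambdaOne_comm (a b : ℝ) : lambdaOne a b = lambdaOne b a := by
  rw [lambdaOne, lambdaOne, add_comm b a]
  ring

theorem identricMean_comm {a b : ℝ} (ha : 0 ≤ a) (hb : 0 ≤ b) :
    identricMean a b = identricMean b a := by
  rw [identricMean, identricMean, ← inv_div (b ^ b), inv_rpow (by positivity), ← rpow_neg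
    (by positivity), ← neg_sub a b, one_div_neg_eq_neg_one_div]

theorem identricMean_eq_exp {a b : ℝ} (ha : 0 < a) (hb : 0 < b) :
    identricMean a b = exp ((b * log b - a * log a) / (b - a) - 1) := by
  rw [identricMean, rpow_def_of_pos ha, rpow_def_of_pos hb, ← exp_sub, ← exp_mul, one_div,
    ← exp_neg, ← exp_add]
  congr 1
  ring

theorem exists_eq_mul_one_sub_and_eq_mul_one_add {a b : ℝ} (ha : 0 < a) (hab : a < b) :
    ∃ s x : ℝ, 0 < s ∧ x ∈ Ioo (0 : ℝ) 1 ∧ a = s * (1 - x) ∧ b = s * (1 + x) := by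
  have hs : 0 < a + b := by linarith
  refine ⟨(a + b) / 2, (b - a) / (a + b), by positivity, ⟨div_pos (by linarith) hs, ?_⟩, ?_, ?_⟩
  · rw [div_lt_one hs]; linarith
  · field_simp; ring
  · field_simp; ring

theorem logMean_mul_one_sub_mul_one_add {s x : ℝ} (hs : 0 < s) (hx : x ∈ Ioo (-1 : ℝ) 1) :
    logMean (s * (1 - x)) (s * (1 + x)) = 2 * s * x / logRatio x := by
  have h₁ : 1 - x ≠ 0 := by linarith [hx.2]
  have h₂ : 1 + x ≠ 0 := by linarith [hx.1]
  rw [logMean, log_mul hs.ne' h₁, log_mul hs.ne' h₂, logRatio]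
  ring

theorem lambdaOne_mul_one_sub_mul_one_add {s x : ℝ} (hs : 0 < s) (hx : x ∈ Ioo (-1 : ℝ) 1) :
    lambdaOne (s * (1 - x)) (s * (1 + x)) = s * x ^ 2 / (logProd x + x * logRatio x) := by
  have h₁ : 1 - x ≠ 0 := by linarith [hx.2]
  have h₂ : 1 + x ≠ 0 := by linarith [hx.1]
  have hsum : (s * (1 - x) + s * (1 + x)) / 2 = s := by ring
  rw [lambdaOne, hsum, log_mul hs.ne' h₁, log_mul hs.ne' h₂, logProd, logRatio, ← mul_div_mul_left
    (s * x ^ 2) _ (by positivity : 4 * s ≠ 0)]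
  congr 1 <;> ring

theorem identricMean_mul_one_sub_mul_one_add {s x : ℝ} (hs : 0 < s) (hx : x ∈ Ioo (-1 : ℝ) 1)
    (hx₀ : x ≠ 0) : identricMean (s * (1 - x)) (s * (1 + x)) =
      s * exp ((x * logProd x + logRatio x) / (2 * x) - 1) := by
  have h₁ : 0 < 1 - x := by linarith [hx.2]
  have h₂ : 0 < 1 + x := by linarith [hx.1]
  have hexp : (s * (1 + x) * log (s * (1 + x)) - s * (1 - x) * log (s * (1 - x))) /
      (s * (1 + x) - s * (1 - x)) - 1 = log s + ((x * logProd x + logRatio x) / (2 * x) - 1) := by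
    have hs₀ := hs.ne'
    rw [log_mul hs₀ h₁.ne', log_mul hs₀ h₂.ne', logProd, logRatio,
      show s * (1 + x) - s * (1 - x) = 2 * s * x by ring]
    field_simp
    ring
  rw [identricMean_eq_exp (by positivity) (by positivity), hexp, exp_add, exp_log hs]

theorem logMean_le_lambdaOne {a b : ℝ} (ha : 0 < a) (hab : a < b) :
    logMean a b ≤ lambdaOne a b := by
  obtain ⟨s, x, hs, hx, rfl, rfl⟩ := exists_eq_mul_one_sub_and_eq_mul_one_add ha hab
  have hx' : x ∈ Ioo (-1 : ℝ) 1 := Ioo_subset_Ioo_left (by norm_num) hx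
  have hP := two_mul_le_logRatio (Ioo_subset_Ico_self hx)
  have hD := sq_le_logProd_add_mul_logRatio (Ioo_subset_Ico_self hx)
  have hDP := two_mul_logProd_add_mul_logRatio_le (Ioo_subset_Ico_self hx)
  rw [logMean_mul_one_sub_mul_one_add hs hx', lambdaOne_mul_one_sub_mul_one_add hs hx',
    div_le_div_iff₀ (by linarith [hx.1]) (by nlinarith [hx.1])]
  nlinarith [mul_pos hs hx.1]

theorem lambdaOne_le_identricMean {a b : ℝ} (ha : 0 < a) (hab : a < b) :
    lambdaOne a b ≤ identricMean a b := by
  obtain ⟨s, x, hs, hx, rfl, rfl⟩ := exists_eq_mul_one_sub_and_eq_mul_one_add ha hab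
  have hx' : x ∈ Ioo (-1 : ℝ) 1 := Ioo_subset_Ioo_left (by norm_num) hx
  have hD := sq_le_logProd_add_mul_logRatio (Ioo_subset_Ico_self hx)
  have hD₀ : 0 < logProd x + x * logRatio x := by nlinarith [hx.1]
  rw [lambdaOne_mul_one_sub_mul_one_add hs hx',
    identricMean_mul_one_sub_mul_one_add hs hx' hx.1.ne', mul_div_assoc]
  refine mul_le_mul_of_nonneg_left ?_ hs.le
  have hgap := logGap_nonneg hx
  rw [logGap] at hgap
  rw [← log_le_iff_le_exp (div_pos (pow_pos hx.1 2) hD₀), log_div (pow_pos hx.1 2).ne' hD₀.ne',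
    log_pow, Nat.cast_ofNat]
  linarith

theorem stmt10 (a b : ℝ) (ha : 0 < a) (hb : 0 < b) (hab : a ≠ b) :
    (b - a) / (Real.log b - Real.log a) ≤
      (b - a) ^ 2 /
        (4 * (a * Real.log a + b * Real.log b - (a + b) * Real.log ((a + b) / 2))) ∧
    (b - a) ^ 2 /
        (4 * (a * Real.log a + b * Real.log b - (a + b) * Real.log ((a + b) / 2))) ≤
      (1 / Real.exp 1) * (b ^ b / a ^ a) ^ (1 / (b - a)) := by
  show logMean a b ≤ lambdaOne a b ∧ lambdaOne a b ≤ identricMean a b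
  rcases hab.lt_or_gt with hlt | hgt
  · exact ⟨logMean_le_lambdaOne ha hlt, lambdaOne_le_identricMean ha hlt⟩
  · rw [logMean_comm, lambdaOne_comm, identricMean_comm ha.le hb.le]
    exact ⟨logMean_le_lambdaOne hb hgt, lambdaOne_le_identricMean hb hgt⟩
end
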